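/- Let φ : ℝ^d → ℝ^d (d ≥ 2) be a homeomorphism and y₁ ∈ ℝ such that the level set L := {x ∈ ℝ^d : (φ(x))₁ = y₁} of the first component is non-empty. Then for each x₀ ∈ L there exists a continuous curve γ : [0,∞) → L with γ(0) = x₀ and ‖γ(t)‖ → ∞ as t → ∞; in particular, L is unbounded. -/
import Mathlib

open Filter

theorem stmt_10 (d : ℕ) (hd : 2 ≤ d)
    (φ : EuclideanSpace ℝ (Fin d) ≃ₜ EuclideanSpace ℝ (Fin d)) (y₁ : ℝ)
    (hL : ({x | φ x ⟨0, by omega⟩ = y₁} :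
      Set (EuclideanSpace ℝ (Fin d))).Nonempty) :
    (∀ x₀ ∈ {x : EuclideanSpace ℝ (Fin d) | φ x ⟨0, by omega⟩ = y₁},
      ∃ γ : ℝ → EuclideanSpace ℝ (Fin d),
        ContinuousOn γ (Set.Ici 0) ∧ γ 0 = x₀ ∧
        (∀ t ∈ Set.Ici (0:ℝ), φ (γ t) ⟨0, by omega⟩ = y₁) ∧
        Filter.Tendsto (fun t => ‖γ t‖) Filter.atTop Filter.atTop) ∧
    ¬ Bornology.IsBounded
        {x : EuclideanSpace ℝ (Fin d) | φ x ⟨0, by omega⟩ = y₁} := by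
  set E := EuclideanSpace ℝ (Fin d)
  have hmain : ∀ x₀ ∈ {x : E | φ x ⟨0, by omega⟩ = y₁},
      ∃ γ : ℝ → E,
        ContinuousOn γ (Set.Ici 0) ∧ γ 0 = x₀ ∧
        (∀ t ∈ Set.Ici (0:ℝ), φ (γ t) ⟨0, by omega⟩ = y₁) ∧
        Filter.Tendsto (fun t => ‖γ t‖) Filter.atTop Filter.atTop := by
    intro x₀ hx₀
    set e : E := EuclideanSpace.single ⟨1, by omega⟩ (1:ℝ) with he
    have hne : (⟨0, by omega⟩ : Fin d) ≠ ⟨1, by omega⟩ := by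
      simp [Fin.ext_iff]
    have he0 : e ⟨0, by omega⟩ = 0 := by
      simp [he, EuclideanSpace.single_apply, hne]
    have hnorme : ‖e‖ = 1 := by
      rw [he, EuclideanSpace.norm_single]; norm_num
    refine ⟨fun t => φ.symm (φ x₀ + t • e), ?_, ?_, ?_, ?_⟩
    · exact (φ.symm.continuous.comp (by continuity)).continuousOn
    · simp
    · intro t _
      have : φ (φ.symm (φ x₀ + t • e)) = φ x₀ + t • e := φ.apply_symm_apply _
      rw [this]
      have : (φ x₀ + t • e) ⟨0, by omega⟩
          = φ x₀ ⟨0, by omega⟩ + t * e ⟨0, by omega⟩ := rfl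
      rw [this, he0, hx₀]; ring
    · have hline : Tendsto (fun t : ℝ => φ x₀ + t • e) atTop (Filter.cocompact E) := by
        apply tendsto_cocompact_of_tendsto_dist_comp_atTop (0 : E)
        have hbound : ∀ t : ℝ, t - ‖φ x₀‖ ≤ dist (φ x₀ + t • e) 0 := by
          intro t
          rw [dist_zero_right]
          have h1 : ‖t • e‖ - ‖φ x₀‖ ≤ ‖φ x₀ + t • e‖ := by
            have := norm_sub_le (φ x₀ + t • e) (φ x₀)
            simpa using this
          have h2 : t ≤ ‖t • e‖ := by
            rw [norm_smul, hnorme, mul_one]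
            exact le_abs_self t
          linarith
        exact tendsto_atTop_mono hbound
          (tendsto_atTop_add_const_right _ _ tendsto_id)
      have hsymm : Tendsto (φ.symm : E → E) (Filter.cocompact E) (Filter.cocompact E) :=
        φ.symm.map_cocompact.le
      exact tendsto_norm_cocompact_atTop.comp (hsymm.comp hline)
  refine ⟨hmain, ?_⟩
  intro hb
  obtain ⟨x₀, hx₀⟩ := hL
  obtain ⟨γ, _, _, hmem, htend⟩ := hmain x₀ hx₀
  obtain ⟨R, hR⟩ := isBounded_iff_forall_norm_le.1 hb
  obtain ⟨t, ht0, htR⟩ := ((htend.eventually_gt_atTop R).and (eventually_ge_atTop (0:ℝ))).exists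
  exact absurd (hR _ (hmem t htR)) (not_le.2 ht0)
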